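/- arXiv:1610.07269 — 7 statements merged into one kernel-verified Lean document; each statement's English description precedes it below -/
import Mathlib

section
/- Let ω₁, …, ω_n be complex roots of unity (each ω_i satisfies ω_i^{m_i} = 1 for some positive integer m_i). Then their average (ω₁ + ⋯ + ω_n)/n is an algebraic integer if and only if either ω₁ + ⋯ + ω_n = 0 or ω₁ = ω₂ = ⋯ = ω_n. -/
/-!
All Galois conjugates of `α = (ω₁ + ⋯ + ωₙ) / n` are again averages of roots of unity, so they lie
in the closed unit disc. If `α` is a nonzero algebraic integer, Kronecker's theorem makes it a root
of unity, so `|α| = 1`; by strict convexity of the disc, an average of points of the disc lies on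
its boundary only when all the points coincide.
-/

open NumberField IntermediateField

lemma isIntegral_of_pow_eq_one {R A : Type*} [CommRing R] [Ring A] [Algebra R A] {x : A} {m : ℕ}
    (hm : 0 < m) (hx : x ^ m = 1) : IsIntegral R x :=
  IsIntegral.of_pow hm (hx ▸ isIntegral_one)

lemma norm_map_average_le_one_of_pow_eq_one {K ι : Type*} [DivisionRing K] [Fintype ι]
    (ω : ι → K) (hω : ∀ i, ∃ m : ℕ, 0 < m ∧ ω i ^ m = 1) (φ : K →+* ℂ) :
    ‖φ ((∑ i, ω i) / Fintype.card ι)‖ ≤ 1 := by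
  have hφω : ∀ i, ‖φ (ω i)‖ = 1 := fun i => by
    obtain ⟨m, hm, hωm⟩ := hω i
    exact Complex.norm_eq_one_of_pow_eq_one (by rw [← map_pow, hωm, map_one]) hm.ne'
  rw [map_div₀, map_sum, map_natCast, norm_div, Complex.norm_natCast]
  calc ‖∑ i, φ (ω i)‖ / Fintype.card ι ≤ (∑ i, ‖φ (ω i)‖) / Fintype.card ι := by
        gcongr; exact norm_sum_le _ _
    _ = Fintype.card ι / Fintype.card ι := by simp [hφω]
    _ ≤ 1 := div_self_le_one _

lemma exists_pow_eq_one_of_isIntegral_average {ι : Type*} [Fintype ι] (ω : ι → ℂ)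
    (hω : ∀ i, ∃ m : ℕ, 0 < m ∧ ω i ^ m = 1)
    (hint : IsIntegral ℤ ((∑ i, ω i) / Fintype.card ι))
    (hne : (∑ i, ω i) / Fintype.card ι ≠ 0) :
    ∃ k : ℕ, 0 < k ∧ ((∑ i, ω i) / Fintype.card ι) ^ k = 1 := by
  let K := adjoin ℚ (Set.range ω)
  have : FiniteDimensional ℚ K := finiteDimensional_adjoin <| by
    rintro _ ⟨i, rfl⟩
    obtain ⟨m, hm, hωm⟩ := hω i
    exact isIntegral_of_pow_eq_one hm hωm
  have : NumberField K := ⟨⟩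
  let ωK : ι → K := fun i => ⟨ω i, subset_adjoin ℚ _ ⟨i, rfl⟩⟩
  have hωK : ∀ i, ∃ m : ℕ, 0 < m ∧ ωK i ^ m = 1 := fun i => by
    obtain ⟨m, hm, hωm⟩ := hω i
    exact ⟨m, hm, Subtype.ext (by simpa [ωK] using hωm)⟩
  have hαK : (((∑ i, ωK i) / Fintype.card ι : K) : ℂ) = (∑ i, ω i) / Fintype.card ι := by
    simp [ωK]
  rw [← hαK] at hint hne ⊢
  obtain ⟨k, hk, hαk⟩ := Embeddings.pow_eq_one_of_norm_le_one K ℂ (by exact_mod_cast hne)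
    ((isIntegral_algHom_iff (K.val : K →+* ℂ).toIntAlgHom K.val.injective).1 hint)
    (norm_map_average_le_one_of_pow_eq_one ωK hωK)
  exact ⟨k, hk, by exact_mod_cast congrArg Subtype.val hαk⟩

lemma eq_of_norm_inv_card_smul_sum_eq {V ι : Type*} [NormedAddCommGroup V] [NormedSpace ℝ V]
    [StrictConvexSpace ℝ V] [Fintype ι] {z : ι → V} {r : ℝ} (hz : ∀ i, ‖z i‖ ≤ r)
    (h : ‖(Fintype.card ι : ℝ)⁻¹ • ∑ i, z i‖ = r) (i j : ι) : z i = z j := by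
  by_contra hij
  have hcard : (Fintype.card ι : ℝ) ≠ 0 := by
    exact_mod_cast (Fintype.card_pos_iff.2 ⟨i⟩).ne'
  have hlt := norm_sum_lt_of_strictConvexSpace (t := Finset.univ)
    (w := fun _ => (Fintype.card ι : ℝ)⁻¹) (fun _ _ => by positivity)
    (by simp [hcard]) (Finset.mem_univ i) (Finset.mem_univ j) hij (inv_ne_zero hcard)
    (inv_ne_zero hcard) (fun k _ => hz k)
  rw [← Finset.smul_sum, h] at hlt
  exact hlt.false

lemma isIntegral_average_of_forall_eq {K ι : Type*} [Field K] [CharZero K] [Fintype ι]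
    (ω : ι → K) (hω : ∀ i, ∃ m : ℕ, 0 < m ∧ ω i ^ m = 1) (heq : ∀ i j, ω i = ω j) :
    IsIntegral ℤ ((∑ i, ω i) / Fintype.card ι) := by
  rcases isEmpty_or_nonempty ι with _ | ⟨⟨i₀⟩⟩
  · simp [isIntegral_zero]
  · obtain ⟨m, hm, hωm⟩ := hω i₀
    have hconst : (∑ i, ω i) / Fintype.card ι = ω i₀ := by
      have hcard : (Fintype.card ι : K) ≠ 0 :=
        Nat.cast_ne_zero.2 (Fintype.card_pos_iff.2 ⟨i₀⟩).ne'
      simp [heq _ i₀, hcard]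
    rw [hconst]
    exact isIntegral_of_pow_eq_one hm hωm

theorem average_of_roots_of_unity_isIntegral_iff_general
    (n : ℕ) (ω : Fin n → ℂ)
    (hω : ∀ i, ∃ m : ℕ, 0 < m ∧ ω i ^ m = 1) :
    IsIntegral ℤ ((∑ i, ω i) / (n : ℂ)) ↔
      (∑ i, ω i = 0 ∨ ∀ i j, ω i = ω j) := by
  rw [show (n : ℂ) = Fintype.card (Fin n) by simp]
  refine ⟨fun hint => ?_, ?_⟩
  · by_cases hs : ∑ i, ω i = 0
    · exact Or.inl hs
    obtain ⟨i₀, -, -⟩ := Finset.exists_ne_zero_of_sum_ne_zero hs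
    obtain ⟨k, hk, hαk⟩ := exists_pow_eq_one_of_isIntegral_average ω hω hint
      (div_ne_zero hs (Nat.cast_ne_zero.2 (Fintype.card_pos_iff.2 ⟨i₀⟩).ne'))
    refine Or.inr (eq_of_norm_inv_card_smul_sum_eq (r := 1) (fun i => ?_) ?_)
    · obtain ⟨m, hm, hωm⟩ := hω i
      exact (Complex.norm_eq_one_of_pow_eq_one hωm hm.ne').le
    · rw [Complex.real_smul, Complex.ofReal_inv, Complex.ofReal_natCast, ← div_eq_inv_mul]
      exact Complex.norm_eq_one_of_pow_eq_one hαk hk.ne'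
  · rintro (hs | heq)
    · rw [hs, zero_div]
      exact isIntegral_zero
    · exact isIntegral_average_of_forall_eq ω hω heq

theorem average_of_roots_of_unity_isIntegral_iff
    (n : ℕ) (hn : 0 < n) (ω : Fin n → ℂ)
    (hω : ∀ i, ∃ m : ℕ, 0 < m ∧ ω i ^ m = 1) :
    IsIntegral ℤ ((∑ i, ω i) / (n : ℂ)) ↔
      (∑ i, ω i = 0 ∨ ∀ i j, ω i = ω j) :=
  average_of_roots_of_unity_isIntegral_iff_general n ω hω
end

section
/- Let p be a prime and let f ∈ (ℤ/pℤ)[X] be a polynomial of degree at most p − 1. Define W_f = {λ ∈ ℤ/pℤ : the map x ↦ f(x) + λ·x is a permutation of ℤ/pℤ}. If the cardinality of W_f is strictly greater than (p − 3)/2, then f has degree at most 1. -/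
open Polynomial Finset


lemma zmod_sum_pow (p : ℕ) [Fact p.Prime] {n : ℕ} (h0 : n ≠ 0) (h2 : n < 2 * (p - 1)) :
    ∑ x : ZMod p, x ^ n = if n = p - 1 then -1 else 0 := by
  have hp : p.Prime := Fact.out
  have hp2 : 2 ≤ p := hp.two_le
  rcases lt_trichotomy n (p - 1) with hlt | heq | hgt
  · rw [if_neg (by omega)]
    have := FiniteField.sum_pow_lt_card_sub_one (K := ZMod p) n (by rwa [ZMod.card])
    exact this
  · rw [if_pos heq, heq]
    have : ∀ x : ZMod p, x ^ (p - 1) = if x = 0 then 0 else 1 := by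
      intro x
      split_ifs with hx
      · subst hx; exact zero_pow (by omega)
      · exact ZMod.pow_card_sub_one_eq_one hx
    rw [Finset.sum_congr rfl fun x _ => this x]
    have : (∑ x : ZMod p, if x = 0 then (0 : ZMod p) else 1)
        = ∑ x : ZMod p, (1 - if x = 0 then 1 else 0) := by
      apply Finset.sum_congr rfl; intro x _; split_ifs <;> ring
    rw [this, Finset.sum_sub_distrib, Finset.sum_const, Finset.sum_ite_eq' Finset.univ (0 : ZMod p) (fun _ => (1 : ZMod p))]
    simp [ZMod.card, ZMod.natCast_self]
  · have hm0 : n - (p - 1) ≠ 0 := by omega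
    have hmlt : n - (p - 1) < p - 1 := by omega
    rw [if_neg (by omega)]
    have : ∀ x : ZMod p, x ^ n = x ^ (n - (p - 1)) := by
      intro x
      by_cases hx : x = 0
      · subst hx; rw [zero_pow h0, zero_pow hm0]
      · have : x ^ n = x ^ (n - (p - 1)) * x ^ (p - 1) := by
          rw [← pow_add]; congr 1; omega
        rw [this, ZMod.pow_card_sub_one_eq_one hx, mul_one]
    rw [Finset.sum_congr rfl fun x _ => this x]
    have := FiniteField.sum_pow_lt_card_sub_one (K := ZMod p) (n - (p - 1)) (by rwa [ZMod.card])
    exact this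

lemma zmod_sum_eval (p : ℕ) [Fact p.Prime] (g : Polynomial (ZMod p))
    (hg : g.natDegree < 2 * (p - 1)) :
    ∑ x : ZMod p, g.eval x = -(g.coeff (p - 1)) := by
  have hp : p.Prime := Fact.out
  have hp2 : 2 ≤ p := hp.two_le
  have : ∀ x : ZMod p, g.eval x = ∑ i ∈ Finset.range (g.natDegree + 1), g.coeff i * x ^ i :=
    fun x => eval_eq_sum_range x
  rw [Finset.sum_congr rfl fun x _ => this x, Finset.sum_comm]
  have hterm : ∀ i ∈ Finset.range (g.natDegree + 1),
      (∑ x : ZMod p, g.coeff i * x ^ i) = if i = p - 1 then -(g.coeff i) else 0 := by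
    intro i hi
    rw [← Finset.mul_sum]
    rcases eq_or_ne i 0 with rfl | hi0
    · simp only [pow_zero, Finset.sum_const, Finset.card_univ, ZMod.card, nsmul_eq_mul,
        mul_one, ZMod.natCast_self, mul_zero, if_neg (by omega : ¬ (0 : ℕ) = p - 1)]
    · rw [zmod_sum_pow p hi0 (by simp at hi; omega)]
      split_ifs <;> ring
  rw [Finset.sum_congr rfl hterm, Finset.sum_ite_eq' (Finset.range (g.natDegree + 1)) (p-1)
    (fun i => -(g.coeff i))]
  split_ifs with hmem
  · rfl
  · rw [Polynomial.coeff_eq_zero_of_natDegree_lt (by simp at hmem; omega), neg_zero]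

lemma stothers_key (p : ℕ) [Fact p.Prime] (hp3 : 3 ≤ p) (f : Polynomial (ZMod p))
    (S : Finset (ZMod p))
    (hS : ∀ l ∈ S, Function.Bijective fun x : ZMod p => f.eval x + l * x)
    (hcard : (p - 1) / 2 ≤ S.card) (j m : ℕ) (hm : 1 ≤ m) (hjm : j + m ≤ (p - 1) / 2) :
    ∑ x : ZMod p, (f.eval x) ^ m * x ^ j = 0 := by
  have hp : p.Prime := Fact.out
  set k := j + m with hk
  have hk1 : 1 ≤ k := by omega
  have hkp : k < p - 1 := by omega
  -- the polynomial in the slope variable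
  set Q : Polynomial (ZMod p) := ∑ i ∈ Finset.range (k + 1),
    Polynomial.monomial i ((k.choose i : ZMod p) * ∑ x : ZMod p, (f.eval x) ^ (k - i) * x ^ i)
    with hQ
  have hQcoeff : ∀ n, Q.coeff n = if n ≤ k then
      ((k.choose n : ZMod p) * ∑ x : ZMod p, (f.eval x) ^ (k - n) * x ^ n) else 0 := by
    intro n
    rw [hQ, Polynomial.finset_sum_coeff]
    rw [Finset.sum_congr rfl (fun i _ => Polynomial.coeff_monomial)]
    rw [Finset.sum_ite_eq' (Finset.range (k+1)) n]
    simp only [Finset.mem_range]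
    split_ifs with h1 h2 h2 <;> first | rfl | omega
  have hQeval : ∀ l : ZMod p, Q.eval l = ∑ x : ZMod p, (f.eval x + l * x) ^ k := by
    intro l
    rw [hQ, Polynomial.eval_finset_sum]
    simp only [Polynomial.eval_monomial]
    have : ∀ x : ZMod p, (f.eval x + l * x) ^ k
        = ∑ i ∈ Finset.range (k + 1), (l * x) ^ i * (f.eval x) ^ (k - i) * (k.choose i : ZMod p) := by
      intro x
      rw [add_comm, add_pow]
    rw [Finset.sum_congr rfl fun x _ => this x, Finset.sum_comm]
    apply Finset.sum_congr rfl
    intro i _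
    rw [Finset.mul_sum, Finset.sum_mul]
    apply Finset.sum_congr rfl
    intro x _
    rw [mul_pow]
    ring
  have hQroot : ∀ l ∈ S, Q.eval l = 0 := by
    intro l hl
    rw [hQeval l]
    have hb := hS l hl
    have : ∑ x : ZMod p, (f.eval x + l * x) ^ k = ∑ y : ZMod p, y ^ k :=
      Function.Bijective.sum_comp hb (fun y => y ^ k)
    rw [this]
    have := zmod_sum_pow p (n := k) (by omega) (by omega)
    rwa [if_neg (by omega)] at this
  have hQdeg : Q.natDegree < k := by
    have : Q.natDegree ≤ k - 1 := by
      rw [Polynomial.natDegree_le_iff_coeff_eq_zero]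
      intro n hn
      rw [hQcoeff n]
      split_ifs with hnk
      · have hkn : k - n = 0 := by omega
        rw [hkn]
        simp only [pow_zero, one_mul]
        have hz := zmod_sum_pow p (n := n) (by omega) (by omega)
        rw [if_neg (by omega)] at hz
        rw [hz, mul_zero]
      · rfl
    omega
  have hQ0 : Q = 0 := by
    apply Polynomial.eq_zero_of_natDegree_lt_card_of_eval_eq_zero' Q S hQroot
    omega
  have := hQcoeff j
  rw [hQ0, Polynomial.coeff_zero, if_pos (by omega)] at this
  have hchoose : (k.choose j : ZMod p) ≠ 0 := by
    rw [Ne, ZMod.natCast_eq_zero_iff]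
    intro hdvd
    have h1 : k.choose j ∣ k.factorial := by
      have := Nat.choose_mul_factorial_mul_factorial (show j ≤ k by omega)
      exact ⟨j.factorial * (k - j).factorial, by rw [← this]; ring⟩
    have := hp.dvd_factorial.mp (hdvd.trans h1)
    omega
  have hkj : k - j = m := by omega
  rcases mul_eq_zero.mp this.symm with h | h
  · exact absurd h hchoose
  · rwa [hkj] at h

theorem stothers_permutation_bound
    (p : ℕ) [Fact p.Prime] (f : Polynomial (ZMod p)) (hdeg : f.natDegree ≤ p - 1)
    (h : ((p : ℚ) - 3) / 2 <
      (Nat.card {l : ZMod p // Function.Bijective fun x : ZMod p => f.eval x + l * x} : ℚ)) :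
    f.natDegree ≤ 1 := by
  classical
  have hp : p.Prime := Fact.out
  have hp2 : 2 ≤ p := hp.two_le
  by_cases hp2' : p = 2
  · omega
  have hp3 : 3 ≤ p := by omega
  have hodd : p % 2 = 1 := Nat.odd_iff.mp (hp.odd_of_ne_two hp2')
  set S : Finset (ZMod p) :=
    Finset.univ.filter (fun l => Function.Bijective fun x : ZMod p => f.eval x + l * x) with hSdef
  have hSmem : ∀ l ∈ S, Function.Bijective fun x : ZMod p => f.eval x + l * x := by
    intro l hl
    exact (Finset.mem_filter.mp hl).2
  have hNcard : Nat.card {l : ZMod p // Function.Bijective fun x : ZMod p => f.eval x + l * x}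
      = S.card := by
    rw [Nat.card_eq_fintype_card, Fintype.card_subtype]
  have hcard : (p - 1) / 2 ≤ S.card := by
    rw [hNcard] at h
    have h2 : (p : ℚ) - 3 < 2 * S.card := by
      have := (div_lt_iff₀ (by norm_num : (0:ℚ) < 2)).mp h
      linarith
    have h4 : p < 2 * S.card + 3 := by exact_mod_cast (by linarith : (p : ℚ) < 2 * S.card + 3)
    omega
  have key := stothers_key p hp3 f S hSmem hcard
  have key2 : ∀ j m : ℕ, 1 ≤ m → j + m ≤ (p - 1) / 2 →
      (f ^ m).natDegree + j < 2 * (p - 1) → (f ^ m).coeff (p - 1 - j) = 0 := by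
    intro j m hm hjm hd2
    have h0 := key j m hm hjm
    have hdg : (f ^ m * X ^ j).natDegree < 2 * (p - 1) := by
      calc (f ^ m * X ^ j).natDegree
          ≤ (f ^ m).natDegree + (X ^ j : Polynomial (ZMod p)).natDegree :=
            Polynomial.natDegree_mul_le
        _ = (f ^ m).natDegree + j := by rw [Polynomial.natDegree_X_pow]
        _ < 2 * (p - 1) := hd2
    have hev := zmod_sum_eval p (f ^ m * X ^ j) hdg
    simp only [Polynomial.eval_mul, Polynomial.eval_pow, Polynomial.eval_X] at hev
    rw [h0, Polynomial.coeff_mul_X_pow' (f ^ m) j (p - 1), if_pos (by omega)] at hev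
    exact neg_eq_zero.mp hev.symm
  have step1 : f.natDegree ≤ (p - 1) / 2 := by
    rw [Polynomial.natDegree_le_iff_coeff_eq_zero]
    intro n hn
    by_cases hn2 : n ≤ p - 1
    · have harg1 : (p - 1 - n) + 1 ≤ (p - 1) / 2 := by omega
      have harg2 : (f ^ 1).natDegree + (p - 1 - n) < 2 * (p - 1) := by rw [pow_one]; omega
      have hc := key2 (p - 1 - n) 1 le_rfl harg1 harg2
      rwa [pow_one, show p - 1 - (p - 1 - n) = n by omega] at hc
    · exact Polynomial.coeff_eq_zero_of_natDegree_lt (by omega)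
  by_contra hcontra
  have hd2 : 2 ≤ f.natDegree := by omega
  set d := f.natDegree with hd
  set m := (p - 1) / d with hm
  set j := (p - 1) % d with hj
  have hdpos : 0 < d := by omega
  have hm2 : 2 ≤ m := by
    rw [hm, Nat.le_div_iff_mul_le hdpos]
    omega
  have hjd : j < d := Nat.mod_lt _ hdpos
  have hsum : j + m * d = p - 1 := by rw [hj, hm, Nat.mod_add_div']
  have hjm : j + m ≤ (p - 1) / 2 := by
    have hcase : j ≤ m * (d - 2) := by
      rcases eq_or_lt_of_le hd2 with h2 | h3
      · have hj0 : j = 0 := by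
          rw [hj, ← h2]
          omega
        omega
      · calc j ≤ d - 1 := by omega
          _ ≤ 2 * (d - 2) := by omega
          _ ≤ m * (d - 2) := Nat.mul_le_mul_right _ hm2
    have hmd : m * (d - 2) + m * 2 = m * d := by
      rw [← Nat.mul_add]
      congr 1
      omega
    rw [Nat.le_div_iff_mul_le (by norm_num : (0:ℕ) < 2)]
    linarith [hcase, hmd, hsum]
  have hdm : (f ^ m).natDegree = m * d := by rw [Polynomial.natDegree_pow]
  have harg2 : (f ^ m).natDegree + j < 2 * (p - 1) := by
    calc (f ^ m).natDegree + j = m * d + j := by rw [hdm]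
      _ = p - 1 := by rw [Nat.add_comm]; exact hsum
      _ < 2 * (p - 1) := by omega
  have hc := key2 j m (by omega) hjm harg2
  have hidx : p - 1 - j = m * d := by rw [← hsum, Nat.add_sub_cancel_left]
  rw [hidx, ← hdm, Polynomial.coeff_natDegree] at hc
  have hf0 : f ≠ 0 := by
    intro h0
    have hzz : d = 0 := by rw [hd, h0, Polynomial.natDegree_zero]
    omega
  exact pow_ne_zero m hf0 (Polynomial.leadingCoeff_eq_zero.mp hc)
end

section
/- Let p be a prime, ω = exp(2πi/p) ∈ ℂ, and f : ℤ/pℤ → ℤ/pℤ a function. Suppose that for every b ∈ ℤ/pℤ the average μ_f^{1,b} = (1/p) · ∑_{x ∈ ℤ/pℤ} ω^{f(x) + b·x} is an algebraic integer. Then f is a linear polynomial function: there exist α, β ∈ ℤ/pℤ such that f(x) = α·x + β for all x ∈ ℤ/pℤ. -/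
/-!
Fix `b = f 0 - f 1`, so that `g x = f x + b x` takes the same value at `0` and `1`. Grouping the
sum by the values of `g`, the hypothesis says that `(1/p) ∑_c N_c ω^c` is an algebraic integer,
where `N_c` is the number of solutions of `g x = c`. Since `ℤ[ω]` is the ring of integers of
`ℚ(ω)`, this number equals some `∑_c M_c ω^c` with `M_c ∈ ℤ`, and the only `ℚ`-linear relation among
`1, ω, …, ω^(p-1)` is their sum; hence all `N_c - p M_c` are equal and the `N_c` are congruent
mod `p`. As `g` is not injective, some `N_c` vanishes, so every `N_c` is `0` or `p`: `g` is
constant, and `f x = (f 1 - f 0) x + f 0`.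
-/

open Finset Polynomial

theorem ZMod.sum_val_eq_sum_range {n : ℕ} [NeZero n] {M : Type*} [AddCommMonoid M]
    (F : ℕ → M) : ∑ c : ZMod n, F c.val = ∑ j ∈ range n, F j := by
  refine sum_nbij' (fun c => c.val) (fun j => j) ?_ ?_ ?_ ?_ ?_ <;>
    simp +contextual [ZMod.val_lt, Nat.mod_eq_of_lt]

theorem IsPrimitiveRoot.mem_adjoin_int_of_isIntegral {L : Type*} [Field L] [CharZero L] {n : ℕ}
    [NeZero n] {ζ : L} (hζ : IsPrimitiveRoot ζ n) {x : L} (hx : x ∈ IntermediateField.adjoin ℚ {ζ})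
    (hint : IsIntegral ℤ x) : x ∈ Algebra.adjoin ℤ {ζ} := by
  set K := IntermediateField.adjoin ℚ {ζ}
  have : IsCyclotomicExtension {n} ℚ K := by
    change IsCyclotomicExtension {n} ℚ K.toSubalgebra
    rw [IntermediateField.adjoin_simple_toSubalgebra_of_isAlgebraic
      (hζ.isIntegral (NeZero.pos n)).tower_top.isAlgebraic]
    exact hζ.adjoin_isCyclotomicExtension ℚ
  let ι : K →ₐ[ℤ] L := K.val.restrictScalars ℤ
  let ζ' : K := ⟨ζ, IntermediateField.mem_adjoin_simple_self ℚ ζ⟩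
  have hζ' : IsPrimitiveRoot ζ' n := hζ.of_map_of_injective (f := ι) Subtype.val_injective
  have := IsCyclotomicExtension.Rat.isIntegralClosure_adjoin_singleton hζ'
  obtain ⟨y, hy⟩ := (IsIntegralClosure.isIntegral_iff (A := Algebra.adjoin ℤ {ζ'})).mp
    ((isIntegral_algHom_iff ι Subtype.val_injective (x := ⟨x, hx⟩)).mp hint)
  change x ∈ Algebra.adjoin ℤ {ι ζ'}
  rw [← AlgHom.map_adjoin_singleton ι ζ']
  exact ⟨y, y.2, congrArg Subtype.val hy⟩

theorem exists_sum_zmod_of_mem_adjoin {R : Type*} [CommRing R] {n : ℕ} [NeZero n] {ζ : R}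
    (hζ : ζ ^ n = 1) {x : R} (hx : x ∈ Algebra.adjoin ℤ {ζ}) :
    ∃ M : ZMod n → ℤ, x = ∑ c, M c * ζ ^ c.val := by
  rw [Algebra.adjoin_singleton_eq_range_aeval] at hx
  obtain ⟨P, rfl⟩ := hx
  show ∃ M : ZMod n → ℤ, aeval ζ P = _
  induction P using Polynomial.induction_on' with
  | add P Q hP hQ =>
    obtain ⟨M, hM⟩ := hP
    obtain ⟨M', hM'⟩ := hQ
    exact ⟨M + M', by simp [map_add, hM, hM', add_mul, sum_add_distrib]⟩
  | monomial k a =>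
    refine ⟨Pi.single (k : ZMod n) a, ?_⟩
    simp [Pi.single_apply, ZMod.val_natCast, ← pow_eq_pow_mod k hζ]

theorem IsPrimitiveRoot.eq_of_sum_range_smul_pow_eq_zero {L : Type*} [Field L] [CharZero L]
    {p : ℕ} [hp : Fact p.Prime] {ζ : L} (hζ : IsPrimitiveRoot ζ p) {A : ℕ → ℚ}
    (hA : ∑ j ∈ range p, A j • ζ ^ j = 0) {j : ℕ} (hj : j < p) : A j = A (p - 1) := by
  have hp1 : p - 1 + 1 = p := Nat.sub_add_cancel hp.out.one_le
  have hshift : ∑ i ∈ range (p - 1), (A i - A (p - 1)) • ζ ^ i = 0 := by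
    have : ∑ i ∈ range p, (A i - A (p - 1)) • ζ ^ i = 0 := by
      simp only [sub_smul, sum_sub_distrib, ← smul_sum, hA, hζ.geom_sum_eq_zero hp.out.one_lt,
        smul_zero, sub_zero]
    rwa [← hp1, sum_range_succ, Nat.add_sub_cancel, sub_self, zero_smul, add_zero] at this
  have hli : LinearIndependent ℚ (fun i : Fin (p - 1) => ζ ^ (i : ℕ)) := by
    have := linearIndependent_pow (K := ℚ) ζ
    rwa [← cyclotomic_eq_minpoly_rat hζ hp.out.pos, natDegree_cyclotomic,
      Nat.totient_prime hp.out] at this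
  have hcoeff := Fintype.linearIndependent_iff.mp hli (fun i => A i - A (p - 1))
    (by rwa [Fin.sum_univ_eq_sum_range (fun i => (A i - A (p - 1)) • ζ ^ i)])
  rcases Nat.lt_or_eq_of_le (Nat.le_sub_one_of_lt hj) with hj | rfl
  · exact sub_eq_zero.mp (hcoeff ⟨j, hj⟩)
  · rfl

theorem IsPrimitiveRoot.intModEq_of_isIntegral_one_div_mul_sum {L : Type*} [Field L] [CharZero L]
    {p : ℕ} [Fact p.Prime] {ζ : L} (hζ : IsPrimitiveRoot ζ p) (N : ZMod p → ℤ)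
    (hint : IsIntegral ℤ ((1 / (p : L)) * ∑ c, N c * ζ ^ c.val)) (c c' : ZMod p) :
    N c ≡ N c' [ZMOD p] := by
  have hmem : (1 / (p : L)) * ∑ c, N c * ζ ^ c.val ∈ IntermediateField.adjoin ℚ {ζ} :=
    mul_mem (div_mem (one_mem _) (natCast_mem _ p)) <| sum_mem fun c _ =>
      mul_mem (intCast_mem _ _) (pow_mem (IntermediateField.mem_adjoin_simple_self ℚ ζ) _)
  obtain ⟨M, hM⟩ := exists_sum_zmod_of_mem_adjoin hζ.pow_eq_one
    (hζ.mem_adjoin_int_of_isIntegral hmem hint)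
  set A : ℕ → ℚ := fun j => N j - p * M j
  have hA : ∑ j ∈ range p, A j • ζ ^ j = 0 := by
    have hp : (p : L) ≠ 0 := Nat.cast_ne_zero.mpr (NeZero.ne p)
    rw [← ZMod.sum_val_eq_sum_range (fun j => A j • ζ ^ j)]
    simp only [A, ZMod.natCast_zmod_val, Rat.smul_def]
    push_cast
    simp only [sub_mul, sum_sub_distrib, mul_assoc, ← mul_sum, ← hM]
    field_simp
    ring
  have hAc : A c.val = A c'.val := by
    rw [hζ.eq_of_sum_range_smul_pow_eq_zero hA (ZMod.val_lt c),
      hζ.eq_of_sum_range_smul_pow_eq_zero hA (ZMod.val_lt c')]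
  simp only [A, ZMod.natCast_zmod_val] at hAc
  have hNM : N c - p * M c = N c' - p * M c' := by exact_mod_cast hAc
  exact Int.modEq_iff_dvd.mpr ⟨M c' - M c, by linear_combination -hNM⟩

theorem Fintype.sum_comp_eq_sum_card_fiber_smul {α β M : Type*} [Fintype α] [Fintype β]
    [DecidableEq β] [AddCommMonoid M] (g : α → β) (F : β → M) :
    ∑ x, F (g x) = ∑ b, Fintype.card {x // g x = b} • F b := by
  simp [← Fintype.sum_fiberwise' g F]

theorem apply_eq_of_card_fiber_modEq {α β : Type*} [Fintype α] [Fintype β] [DecidableEq β]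
    {g : α → β} (hcard : Fintype.card α = Fintype.card β) (hg : ¬ Function.Injective g)
    (hmod : ∀ b b', Fintype.card {x // g x = b} ≡ Fintype.card {x // g x = b'}
      [MOD Fintype.card α]) (x y : α) : g x = g y := by
  obtain ⟨b₀, hb₀⟩ : ∃ b₀, ∀ x, g x ≠ b₀ := by
    have : ¬ Function.Surjective g := fun hs =>
      hg ((Fintype.bijective_iff_surjective_and_card g).mpr ⟨hs, hcard⟩).1
    simpa [Function.Surjective] using this
  have hempty : Fintype.card {x // g x = b₀} = 0 :=
    Fintype.card_eq_zero_iff.mpr ⟨fun x => hb₀ x.1 x.2⟩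
  have hdvd : Fintype.card α ∣ Fintype.card {x' // g x' = g x} :=
    Nat.modEq_zero_iff_dvd.mp (hempty ▸ hmod (g x) b₀)
  have hfull : Fintype.card {x' // g x' = g x} = Fintype.card α :=
    le_antisymm (Fintype.card_subtype_le _)
      (Nat.le_of_dvd (Fintype.card_pos_iff.mpr ⟨⟨x, rfl⟩⟩) hdvd)
  by_contra hxy
  exact (Fintype.card_subtype_lt (p := fun x' => g x' = g x) (x := y) fun h => hxy h.symm).ne hfull

theorem linear_of_average_isIntegral_fixed_a_one
    (p : ℕ) [Fact p.Prime] (ω : ℂ) (hω : ω = Complex.exp (2 * Real.pi * Complex.I / p))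
    (f : ZMod p → ZMod p)
    (h : ∀ b : ZMod p,
      IsIntegral ℤ ((1 / (p : ℂ)) * ∑ x : ZMod p, ω ^ (f x + b * x).val)) :
    ∃ α β : ZMod p, ∀ x : ZMod p, f x = α * x + β := by
  have hω' : IsPrimitiveRoot ω p := hω ▸ Complex.isPrimitiveRoot_exp p (NeZero.ne p)
  set g : ZMod p → ZMod p := fun x => f x + (f 0 - f 1) * x
  have hsum : ∑ x, ω ^ (g x).val = ∑ c, ((Fintype.card {x // g x = c} : ℤ) : ℂ) * ω ^ c.val := by
    simp [Fintype.sum_comp_eq_sum_card_fiber_smul g (fun c => ω ^ c.val)]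
  have hmod := hω'.intModEq_of_isIntegral_one_div_mul_sum (fun c => Fintype.card {x // g x = c})
    (hsum ▸ h (f 0 - f 1))
  have hg_not_inj : ¬ Function.Injective g := fun hinj =>
    zero_ne_one (hinj (by simp [g]) : (0 : ZMod p) = 1)
  have hg_const : ∀ x, g x = g 0 := fun x =>
    apply_eq_of_card_fiber_modEq rfl hg_not_inj
      (fun b b' => by simpa [ZMod.card] using Int.natCast_modEq_iff.mp (hmod b b')) x 0
  refine ⟨f 1 - f 0, f 0, fun x => ?_⟩
  have := hg_const x
  simp only [g, mul_zero, add_zero] at this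
  linear_combination this
end

section
/- Let p be a prime, ω = exp(2πi/p) ∈ ℂ, and f : ℤ/pℤ → ℤ/pℤ a function. Suppose that for every a, b ∈ ℤ/pℤ the average μ_f^{a,b} = (1/p) · ∑_{x ∈ ℤ/pℤ} ω^{a·f(x) + b·x} is an algebraic integer. Then f is a linear polynomial function: there exist α, β ∈ ℤ/pℤ such that f(x) = α·x + β for all x ∈ ℤ/pℤ. -/
/-!
Take `a = 1` and shear by `b = f 0 - f 1`, so that `g x = f x + b x` satisfies `g 0 = g 1`.
Then `p μ = M(ω)` for `M = ∑ₓ X ^ g x = ∑ⱼ nⱼ X ^ j`, where `nⱼ` is the size of the fibre of `g`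
over `j`. As the ring of integers of `ℚ(ω)` is `ℤ[ω]`, integrality of `μ` gives
`M = p P + Φ_p Q` in `ℤ[X]`, so `Φ_p = 1 + X + ⋯ + X ^ (p - 1)` divides `M` modulo `p`, and since
`deg M < p` all the `nⱼ` are congruent modulo `p`. A fibre with two points together with a second
nonempty fibre would make this common residue nonzero, so every one of the `p` fibres would be
nonempty, which is impossible with only `p` points. Hence `g` is constant and `f` is affine.
-/

open Polynomial Finset

theorem IsPrimitiveRoot.exists_aeval_int_eq_of_isIntegral {L : Type*} [Field L] [CharZero L]
    {p : ℕ} [Fact p.Prime] {ζ : L} (hζ : IsPrimitiveRoot ζ p) {Q : ℚ[X]}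
    (hQ : IsIntegral ℤ (aeval ζ Q)) : ∃ P : ℤ[X], aeval ζ P = aeval ζ Q := by
  have hp : 0 < p := (Fact.out : p.Prime).pos
  have : NeZero p := ⟨hp.ne'⟩
  let K := IntermediateField.adjoin ℚ {ζ}
  have : IsCyclotomicExtension {p} ℚ K := by
    change IsCyclotomicExtension {p} ℚ K.toSubalgebra
    rw [IntermediateField.adjoin_simple_toSubalgebra_of_isAlgebraic
      (hζ.isIntegral hp).tower_top.isAlgebraic]
    exact hζ.adjoin_isCyclotomicExtension ℚ
  let ζ' : K := ⟨ζ, IntermediateField.mem_adjoin_simple_self ℚ ζ⟩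
  have hζ' : IsPrimitiveRoot ζ' p := IsPrimitiveRoot.coe_submonoidClass_iff.mp hζ
  have hval : ∀ P : ℚ[X], ((aeval ζ' P : K) : L) = aeval ζ P :=
    fun P => (aeval_algHom_apply K.val ζ' P).symm
  have hint : IsIntegral ℤ (aeval ζ' Q) := by
    rwa [← isIntegral_algHom_iff (K.val.restrictScalars ℤ) Subtype.val_injective,
      AlgHom.restrictScalars_apply, IntermediateField.coe_val, hval]
  have := IsCyclotomicExtension.Rat.isIntegralClosure_adjoin_singleton_of_prime hζ'
  obtain ⟨⟨y, hy⟩, hyQ⟩ :=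
    (IsIntegralClosure.isIntegral_iff (A := Algebra.adjoin ℤ {ζ'})).mp hint
  rw [Algebra.adjoin_singleton_eq_range_aeval] at hy
  obtain ⟨P, rfl⟩ := hy
  refine ⟨P, ?_⟩
  rw [← hval Q, ← hyQ]
  exact aeval_algHom_apply (K.val.restrictScalars ℤ) ζ' P

theorem IsPrimitiveRoot.cyclotomic_dvd_map_of_isIntegral_div {L : Type*} [Field L] [CharZero L]
    {p : ℕ} [Fact p.Prime] {ζ : L} (hζ : IsPrimitiveRoot ζ p) {M : ℤ[X]}
    (hM : IsIntegral ℤ (aeval ζ M / p)) :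
    cyclotomic p (ZMod p) ∣ M.map (Int.castRingHom (ZMod p)) := by
  have hp : 0 < p := (Fact.out : p.Prime).pos
  have hMQ : aeval ζ M / p = aeval ζ (C (1 / p : ℚ) * M.map (algebraMap ℤ ℚ)) := by
    rw [map_mul, aeval_C, aeval_map_algebraMap ℚ]
    simp [div_eq_inv_mul]
  obtain ⟨P, hP⟩ := hζ.exists_aeval_int_eq_of_isIntegral (hMQ ▸ hM)
  have hroot : aeval ζ (M - C (p : ℤ) * P) = 0 := by
    rw [map_sub, map_mul, aeval_C, hP, ← hMQ]
    simp [mul_div_cancel₀ _ (Nat.cast_ne_zero.mpr hp.ne' : (p : L) ≠ 0)]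
  obtain ⟨Q, hQ⟩ : cyclotomic p ℤ ∣ M - C (p : ℤ) * P := by
    rw [cyclotomic_eq_minpoly hζ hp]
    exact minpoly.isIntegrallyClosed_dvd (hζ.isIntegral hp) hroot
  refine ⟨Q.map (Int.castRingHom (ZMod p)), ?_⟩
  simpa using congrArg (Polynomial.map (Int.castRingHom (ZMod p))) hQ

theorem Polynomial.coeff_eq_coeff_of_cyclotomic_dvd {R : Type*} [CommRing R] [Nontrivial R]
    {p : ℕ} [Fact p.Prime]
    {M : R[X]} (hdvd : cyclotomic p R ∣ M) (hdeg : M.natDegree < p) {i j : ℕ} (hi : i < p)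
    (hj : j < p) : M.coeff i = M.coeff j := by
  obtain ⟨Q, rfl⟩ := hdvd
  obtain rfl | hQ := eq_or_ne Q 0
  · simp
  have hQdeg : Q.natDegree = 0 := by
    have := (cyclotomic.monic p R).natDegree_mul' hQ
    rw [natDegree_cyclotomic, Nat.totient_prime Fact.out] at this
    omega
  rw [eq_C_of_natDegree_eq_zero hQdeg, cyclotomic_prime, coeff_mul_C, coeff_mul_C,
    finsetSum_coeff, finsetSum_coeff]
  simp [coeff_X_pow, hi, hj]

theorem IsPrimitiveRoot.card_fiber_modEq_of_isIntegral {L : Type*} [Field L] [CharZero L]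
    {p : ℕ} [Fact p.Prime] {ζ : L} (hζ : IsPrimitiveRoot ζ p) {α : Type*} [Fintype α]
    (g : α → ZMod p) (hg : IsIntegral ℤ ((1 / (p : L)) * ∑ x, ζ ^ (g x).val)) (j j' : ZMod p) :
    #{x | g x = j} ≡ #{x | g x = j'} [MOD p] := by
  have hp : 0 < p := (Fact.out : p.Prime).pos
  have : NeZero p := ⟨hp.ne'⟩
  set M : ℤ[X] := ∑ x, X ^ (g x).val
  have hdvd : cyclotomic p (ZMod p) ∣ M.map (Int.castRingHom (ZMod p)) := by
    refine hζ.cyclotomic_dvd_map_of_isIntegral_div ?_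
    simpa [M, div_eq_inv_mul] using hg
  have hdeg : (M.map (Int.castRingHom (ZMod p))).natDegree < p := by
    refine (natDegree_map_le).trans_lt (lt_of_le_of_lt (b := p - 1) ?_ (by omega))
    refine natDegree_sum_le_of_forall_le _ _ fun x _ => ?_
    rw [natDegree_X_pow]
    exact Nat.le_sub_one_of_lt (g x).val_lt
  have hcoeff : ∀ i : ZMod p,
      (M.map (Int.castRingHom (ZMod p))).coeff i.val = (#{x | g x = i} : ZMod p) := by
    intro i
    simp [M, (ZMod.val_injective p).eq_iff, eq_comm]
  rw [← ZMod.natCast_eq_natCast_iff, ← hcoeff, ← hcoeff]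
  exact coeff_eq_coeff_of_cyclotomic_dvd hdvd hdeg j.val_lt j'.val_lt

theorem Function.eq_of_card_fiber_modEq {α β : Type*} [Fintype α] [Fintype β] [DecidableEq β]
    {g : α → β} {n : ℕ} (hα : Fintype.card α = n) (hβ : Fintype.card β = n)
    (hmod : ∀ j j', #{x | g x = j} ≡ #{x | g x = j'} [MOD n])
    {x y : α} (hxy : x ≠ y) (hgxy : g x = g y) (z : α) : g z = g x := by
  by_contra hz
  have hx : 1 < #{w | g w = g x} := one_lt_card.mpr ⟨x, by simp, y, by simp [hgxy], hxy⟩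
  have hz_pos : 0 < #{w | g w = g z} := card_pos.mpr ⟨z, by simp⟩
  have hz_lt : #{w | g w = g z} < n := by
    have hdisj : Disjoint ({w | g w = g z} : Finset α) ({w | g w = g x} : Finset α) :=
      disjoint_filter.mpr fun w _ h1 h2 => hz (h1.symm.trans h2)
    have := (card_disjUnion _ _ hdisj).symm.trans_le (card_le_univ _)
    omega
  -- every fibre is congruent to a nonempty, non-full one, hence nonempty
  have hsurj : Function.Surjective g := by
    intro j
    by_contra hj
    have hempty : #{w | g w = j} = 0 := card_eq_zero.mpr <| filter_eq_empty_iff.mpr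
      fun w _ hw => hj ⟨w, hw⟩
    have := hmod j (g z)
    rw [hempty, Nat.ModEq, Nat.zero_mod, Nat.mod_eq_of_lt hz_lt] at this
    omega
  have hinj := ((Fintype.bijective_iff_surjective_and_card g).mpr ⟨hsurj, hα.trans hβ.symm⟩).1
  exact hxy (hinj hgxy)

theorem linear_of_average_isIntegral_all_a_b
    (p : ℕ) [Fact p.Prime] (ω : ℂ) (hω : ω = Complex.exp (2 * Real.pi * Complex.I / p))
    (f : ZMod p → ZMod p)
    (h : ∀ a b : ZMod p,
      IsIntegral ℤ ((1 / (p : ℂ)) * ∑ x : ZMod p, ω ^ (a * f x + b * x).val)) :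
    ∃ α β : ZMod p, ∀ x : ZMod p, f x = α * x + β := by
  have hp : p.Prime := Fact.out
  have : NeZero p := ⟨hp.ne_zero⟩
  have hω : IsPrimitiveRoot ω p := hω ▸ Complex.isPrimitiveRoot_exp p hp.ne_zero
  set g : ZMod p → ZMod p := fun x => 1 * f x + (f 0 - f 1) * x with hg
  have hconst := Function.eq_of_card_fiber_modEq (ZMod.card p) (ZMod.card p)
    (hω.card_fiber_modEq_of_isIntegral g (h 1 (f 0 - f 1)))
    zero_ne_one (show g 0 = g 1 by simp [hg])
  refine ⟨f 1 - f 0, f 0, fun x => ?_⟩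
  have := hconst x
  simp only [hg] at this
  linear_combination this
end

section
/- Let p be a prime, ω = exp(2πi/p) ∈ ℂ, and f : ℤ/pℤ → ℤ/pℤ a function. Then (1/p) · ∑_{x ∈ ℤ/pℤ} ω^{a·f(x) + b·x} is an algebraic integer for every a, b ∈ ℤ/pℤ if and only if there exist α, β ∈ ℤ/pℤ such that f(x) = α·x + β for all x ∈ ℤ/pℤ. -/
/-!
Write `ψ(t) = ω ^ t.val`, an additive character of `ℤ/pℤ`. If `f` is affine, `a f(x) + b x` is
affine in `x`, so the sum is either `p ψ(d)` or `0` by orthogonality of characters.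

Conversely, put `g(x) = f(x) + (f 0 - f 1) x`, so that `g 0 = g 1`, and `Q = ∑ₓ X ^ (g x).val`;
then `Q(ω) / p` is an algebraic integer. As `ℤ[ω]` is the ring of integers of `ℚ(ω)`, we get
`Q(ω) = p P(ω)` for some `P ∈ ℤ[X]`, so `Φ_p ∣ Q - p P`, and modulo `p` the polynomial
`Q` of degree `< p` is a multiple of `Φ_p = 1 + X + ⋯ + X ^ (p - 1)`: all fibres of `g` have the same
size modulo `p`. A non-injective self-map of `ℤ/pℤ` misses a value, so these sizes are all
`≡ 0`, which forces `g` to be constant, i.e. `f` to be affine.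
-/

open Polynomial Finset IntermediateField

theorem AddChar.IsPrimitive.sum_mul_add {R R' : Type*} [CommRing R] [Fintype R] [DecidableEq R]
    [CommRing R'] [IsDomain R'] {ψ : AddChar R R'} (hψ : ψ.IsPrimitive) (c d : R) :
    ∑ x, ψ (x * c + d) = if c = 0 then Fintype.card R * ψ d else 0 := by
  simp_rw [AddChar.map_add_eq_mul, ← Finset.sum_mul, AddChar.sum_mulShift c hψ]
  split_ifs <;> simp

theorem Function.eq_of_not_injective_of_card_fiber_modEq {α : Type*} [Fintype α] [DecidableEq α]
    {g : α → α} (hg : ¬ Function.Injective g)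
    (hfib : ∀ a b, #{x | g x = a} ≡ #{x | g x = b} [MOD Fintype.card α]) (x y : α) :
    g x = g y := by
  obtain ⟨a, ha⟩ : ∃ a, ∀ x, g x ≠ a := by
    simpa [Function.Surjective] using mt Finite.injective_iff_surjective.mpr hg
  have hzero : #{z | g z = g x} ≡ 0 [MOD Fintype.card α] := by
    simpa [ha] using hfib (g x) a
  have hpos : 0 < #{z | g z = g x} := card_pos.mpr ⟨x, by simp⟩
  have hle : #{z | g z = g x} ≤ Fintype.card α := card_le_univ _
  have hfull : #{z | g z = g x} = Fintype.card α :=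
    Nat.eq_of_dvd_of_lt_two_mul hpos.ne' (Nat.modEq_zero_iff_dvd.mp hzero) (by omega)
  have hy : y ∈ ({z | g z = g x} : Finset α) := by
    rw [Finset.eq_univ_of_card _ hfull]
    exact mem_univ y
  exact (mem_filter.mp hy).2.symm

section SumXPowVal

variable {R α : Type*} [Semiring R] [Fintype α] {n : ℕ} [NeZero n]

theorem coeff_sum_X_pow_val [DecidableEq α] (g : α → ZMod n) (k : ZMod n) :
    (∑ x, X ^ (g x).val : R[X]).coeff k.val = #{x | g x = k} := by
  simp [finsetSum_coeff, coeff_X_pow, (ZMod.val_injective n).eq_iff, eq_comm]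

theorem natDegree_sum_X_pow_val_lt (g : α → ZMod n) :
    (∑ x, X ^ (g x).val : R[X]).natDegree < n := by
  refine (natDegree_sum_le_of_forall_le _ _ fun x _ => ?_).trans_lt
    (Nat.sub_one_lt (NeZero.ne n))
  exact (natDegree_X_pow_le _).trans (Nat.le_sub_one_of_lt (g x).val_lt)

end SumXPowVal

section Cyclotomic

variable {p : ℕ} [hp : Fact p.Prime]

theorem coeff_eq_coeff_zero_of_cyclotomic_dvd {R : Type*} [CommRing R] [Nontrivial R]
    {Q : R[X]} (hdvd : cyclotomic p R ∣ Q) (hdeg : Q.natDegree < p) {i : ℕ} (hi : i < p) :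
    Q.coeff i = Q.coeff 0 := by
  rw [eq_leadingCoeff_mul_of_monic_of_dvd_of_natDegree_le (cyclotomic.monic p R) hdvd
    (by rw [natDegree_cyclotomic, Nat.totient_prime hp.out]; omega), cyclotomic_prime]
  simp [coeff_C_mul, coeff_X_pow, hi, hp.out.pos]

variable {L : Type*} [Field L] [CharZero L] {ω : L}

theorem IsPrimitiveRoot.mem_adjoin_int_of_isIntegral_s7 (hω : IsPrimitiveRoot ω p) {z : L}
    (hz : z ∈ ℚ⟮ω⟯) (hint : IsIntegral ℤ z) : z ∈ Algebra.adjoin ℤ {ω} := by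
  have : IsCyclotomicExtension {p} ℚ ℚ⟮ω⟯ := by
    change IsCyclotomicExtension {p} ℚ ℚ⟮ω⟯.toSubalgebra
    rw [adjoin_simple_toSubalgebra_of_isAlgebraic
      (hω.isIntegral hp.out.pos).tower_top.isAlgebraic]
    exact hω.adjoin_isCyclotomicExtension ℚ
  have hζ : IsPrimitiveRoot (AdjoinSimple.gen ℚ ω) p :=
    IsPrimitiveRoot.coe_submonoidClass_iff.mp hω
  have := IsCyclotomicExtension.Rat.isIntegralClosure_adjoin_singleton_of_prime hζ
  let ι : ℚ⟮ω⟯ →ₐ[ℤ] L := ℚ⟮ω⟯.val.restrictScalars ℤ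
  have hint' : IsIntegral ℤ (⟨z, hz⟩ : ℚ⟮ω⟯) :=
    (isIntegral_algHom_iff ι ℚ⟮ω⟯.val.injective).mp hint
  obtain ⟨y, hy⟩ :=
    (IsIntegralClosure.isIntegral_iff (A := Algebra.adjoin ℤ {AdjoinSimple.gen ℚ ω})).mp hint'
  have hmap : ι y ∈ (Algebra.adjoin ℤ {AdjoinSimple.gen ℚ ω}).map ι :=
    Subalgebra.mem_map.mpr ⟨_, y.2, rfl⟩
  have hy' : (y : ℚ⟮ω⟯) = ⟨z, hz⟩ := hy
  rwa [AlgHom.map_adjoin, Set.image_singleton, hy'] at hmap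

theorem IsPrimitiveRoot.cyclotomic_dvd_sub_of_isIntegral (hω : IsPrimitiveRoot ω p) {Q : ℤ[X]}
    (hint : IsIntegral ℤ (aeval ω Q / p)) : ∃ P : ℤ[X], cyclotomic p ℤ ∣ Q - C (p : ℤ) * P := by
  have hadjoin : Algebra.adjoin ℤ {ω} ≤ ℚ⟮ω⟯.toSubalgebra.restrictScalars ℤ :=
    Algebra.adjoin_le (by simp)
  have hz : aeval ω Q / p ∈ ℚ⟮ω⟯ :=
    div_mem (hadjoin (aeval_mem_adjoin_singleton ℤ ω)) (IntermediateField.natCast_mem _ p)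
  obtain ⟨P, hP⟩ :=
    Algebra.adjoin_singleton_eq_range_aeval ℤ ω ▸ hω.mem_adjoin_int_of_isIntegral_s7 hz hint
  refine ⟨P, cyclotomic_eq_minpoly hω hp.out.pos ▸
    minpoly.isIntegrallyClosed_dvd (hω.isIntegral hp.out.pos) ?_⟩
  have hP' : aeval ω P = aeval ω Q / p := hP
  rw [map_sub, map_mul, aeval_C, hP', algebraMap_int_eq, eq_intCast, Int.cast_natCast,
    mul_div_cancel₀ _ (Nat.cast_ne_zero.2 hp.out.ne_zero), sub_self]

theorem IsPrimitiveRoot.intCast_coeff_eq_of_isIntegral (hω : IsPrimitiveRoot ω p) {Q : ℤ[X]}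
    (hdeg : Q.natDegree < p) (hint : IsIntegral ℤ (aeval ω Q / p)) {i : ℕ} (hi : i < p) :
    (Q.coeff i : ZMod p) = Q.coeff 0 := by
  obtain ⟨P, hdvd⟩ := hω.cyclotomic_dvd_sub_of_isIntegral hint
  have hdvd' : cyclotomic p (ZMod p) ∣ Q.map (Int.castRingHom (ZMod p)) := by
    simpa [map_cyclotomic] using Polynomial.map_dvd (Int.castRingHom (ZMod p)) hdvd
  simpa using coeff_eq_coeff_zero_of_cyclotomic_dvd hdvd' (natDegree_map_le.trans_lt hdeg) hi

end Cyclotomic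

theorem average_isIntegral_iff_linear
    (p : ℕ) [Fact p.Prime] (ω : ℂ) (hω : ω = Complex.exp (2 * Real.pi * Complex.I / p))
    (f : ZMod p → ZMod p) :
    (∀ a b : ZMod p,
      IsIntegral ℤ ((1 / (p : ℂ)) * ∑ x : ZMod p, ω ^ (a * f x + b * x).val)) ↔
      ∃ α β : ZMod p, ∀ x : ZMod p, f x = α * x + β := by
  have hprim : IsPrimitiveRoot ω p := hω ▸ Complex.isPrimitiveRoot_exp p (NeZero.ne p)
  constructor
  · intro H
    set g : ZMod p → ZMod p := fun x => f x + (f 0 - f 1) * x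
    have hg : ¬ Function.Injective g := fun h => zero_ne_one (h (by simp [g]))
    have hint : IsIntegral ℤ (aeval ω (∑ x, X ^ (g x).val : ℤ[X]) / p) := by
      simpa [g, map_sum, div_eq_inv_mul] using H 1 (f 0 - f 1)
    have hcoeff (k : ZMod p) :
        (#{x | g x = k} : ZMod p) = (∑ x, X ^ (g x).val : ℤ[X]).coeff 0 := by
      rw [← hprim.intCast_coeff_eq_of_isIntegral (natDegree_sum_X_pow_val_lt g) hint k.val_lt,
        coeff_sum_X_pow_val, Int.cast_natCast]
    have hfib (k j : ZMod p) : #{x | g x = k} ≡ #{x | g x = j} [MOD Fintype.card (ZMod p)] := by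
      rw [ZMod.card, ← ZMod.natCast_eq_natCast_iff, hcoeff, hcoeff]
    refine ⟨-(f 0 - f 1), g 0, fun x => ?_⟩
    linear_combination Function.eq_of_not_injective_of_card_fiber_modEq hg hfib x 0
  · rintro ⟨α, β, hf⟩ a b
    have hψ := AddChar.zmodChar_primitive_of_primitive_root p hprim
    have hterm (x : ZMod p) : ω ^ (a * f x + b * x).val =
        AddChar.zmodChar p hprim.pow_eq_one (x * (a * α + b) + a * β) := by
      rw [AddChar.zmodChar_apply, hf]
      ring_nf
    simp_rw [hterm, hψ.sum_mul_add]
    split_ifs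
    · rw [ZMod.card, ← mul_assoc, one_div_mul_cancel (NeZero.ne (p : ℂ)), one_mul]
      exact (hprim.isIntegral (NeZero.pos p)).pow _
    · rw [mul_zero]
      exact isIntegral_zero
end

section
/- Let p be a prime, ω = exp(2πi/p) ∈ ℂ, and f : ℤ/pℤ → ℤ/pℤ a bijection. Then the following are equivalent: (i) for every a, b ∈ ℤ/pℤ the number (1/p) · ∑_{x ∈ ℤ/pℤ} ω^{a·f(x) + b·x} is an algebraic integer; (ii) f is a linear bijection, i.e., there exist α, β ∈ ℤ/pℤ with α ≠ 0 such that f(x) = α·x + β for all x ∈ ℤ/pℤ. (This is the integrality condition making the isometry I_f of the character ring of the cyclic group C_p a perfect isometry.) -/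
/-!
Write `ψ u = ω ^ u.val`, a primitive additive character of `ZMod p`. If `f x = α x + β`, each sum
`∑ₓ ψ (a f x + b x)` is `0` or `p` times a root of unity. Conversely, `(1/p) ∑ₓ ψ (f x + b x)` is an
algebraic integer all of whose conjugates lie in the closed unit disc, so by Kronecker's theorem it
is `0` or has absolute value `1`; in the second case strict convexity of the disc forces all terms
to be equal, i.e. `f x + b x` is constant. The sums cannot vanish for every `b`, because by
orthogonality their total over `b` is `p ψ (f 0)`.
-/

open NumberField IntermediateField

theorem norm_mean_le_one {V : Type*} [SeminormedAddCommGroup V] [NormedSpace ℝ V] {ι : Type*}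
    [Fintype ι] {u : ι → V} (hu : ∀ i, ‖u i‖ ≤ 1) :
    ‖(Fintype.card ι : ℝ)⁻¹ • ∑ i, u i‖ ≤ 1 := by
  calc ‖(Fintype.card ι : ℝ)⁻¹ • ∑ i, u i‖ ≤ (Fintype.card ι : ℝ)⁻¹ * ∑ _i : ι, 1 := by
        rw [norm_smul, norm_inv, Real.norm_natCast]
        gcongr
        exact (norm_sum_le _ _).trans (Finset.sum_le_sum fun i _ => hu i)
    _ ≤ 1 := by
        rw [Finset.sum_const, Finset.card_univ, nsmul_one]
        exact inv_mul_le_one_of_le₀ le_rfl (Nat.cast_nonneg _)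

theorem eq_of_norm_mean_eq_one {V : Type*} [NormedAddCommGroup V] [NormedSpace ℝ V]
    [StrictConvexSpace ℝ V] {ι : Type*} [Fintype ι] {u : ι → V} (hu : ∀ i, ‖u i‖ ≤ 1)
    (h : ‖(Fintype.card ι : ℝ)⁻¹ • ∑ i, u i‖ = 1) (i j : ι) : u i = u j := by
  by_contra hij
  have hcard : (0 : ℝ) < Fintype.card ι := by exact_mod_cast Fintype.card_pos_iff.2 ⟨i⟩
  refine (norm_sum_lt_of_strictConvexSpace (w := fun _ => (Fintype.card ι : ℝ)⁻¹)
    (fun _ _ => by positivity) (by simp [hcard.ne']) (Finset.mem_univ i) (Finset.mem_univ j) hij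
    (by positivity) (by positivity) fun k _ => hu k).ne ?_
  rw [← Finset.smul_sum, h]

theorem NumberField.Embeddings.eq_zero_or_forall_norm_eq_one {K : Type*} [Field K] [NumberField K]
    (A : Type*) [NormedField A] [IsAlgClosed A] [NormedAlgebra ℚ A] {x : K}
    (hxi : IsIntegral ℤ x) (hx : ∀ φ : K →+* A, ‖φ x‖ ≤ 1) :
    x = 0 ∨ ∀ φ : K →+* A, ‖φ x‖ = 1 := by
  refine or_iff_not_imp_left.2 fun hx₀ φ => ?_
  obtain ⟨n, hn, hxn⟩ := Embeddings.pow_eq_one_of_norm_le_one K A hx₀ hxi hx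
  exact (φ.toMonoidHom.isOfFinOrder (isOfFinOrder_iff_pow_eq_one.2 ⟨n, hn, hxn⟩)).norm_eq_one

theorem eq_zero_or_norm_eq_one_of_isIntegral_mean_pow {ι : Type*} [Fintype ι] {ω : ℂ} {n : ℕ}
    (hn : n ≠ 0) (hω : ω ^ n = 1) (k : ι → ℕ)
    (hint : IsIntegral ℤ ((Fintype.card ι : ℂ)⁻¹ * ∑ i, ω ^ k i)) :
    (Fintype.card ι : ℂ)⁻¹ * ∑ i, ω ^ k i = 0 ∨
      ‖(Fintype.card ι : ℂ)⁻¹ * ∑ i, ω ^ k i‖ = 1 := by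
  have hωint : IsIntegral ℤ ω := .of_pow (Nat.pos_of_ne_zero hn) (hω ▸ isIntegral_one)
  let K := ℚ⟮ω⟯
  have : NumberField K :=
    { to_charZero := K.charZero
      to_finiteDimensional := adjoin.finiteDimensional hωint.tower_top }
  let ζ : K := AdjoinSimple.gen ℚ ω
  have hζ : ζ ^ n = 1 := Subtype.ext (by simpa [ζ] using hω)
  let y : K := (Fintype.card ι : K)⁻¹ * ∑ i, ζ ^ k i
  have hy : algebraMap K ℂ y = (Fintype.card ι : ℂ)⁻¹ * ∑ i, ω ^ k i := by simp [y, ζ]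
  have hyint : IsIntegral ℤ y := by
    rwa [← isIntegral_algebraMap_iff (FaithfulSMul.algebraMap_injective K ℂ), hy]
  have hle (φ : K →+* ℂ) : ‖φ y‖ ≤ 1 := by
    have hφζ : ‖φ ζ‖ = 1 := Complex.norm_eq_one_of_pow_eq_one (by rw [← map_pow, hζ, map_one]) hn
    simpa [y, Complex.real_smul] using
      norm_mean_le_one fun i => (norm_pow (φ ζ) (k i)).trans_le (by simp [hφζ])
  rw [← hy]
  rcases Embeddings.eq_zero_or_forall_norm_eq_one ℂ hyint hle with h | h
  · exact .inl (by rw [h, map_zero])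
  · exact .inr (h _)

theorem sum_pow_eq_zero_or_pow_eq_of_isIntegral_mean {ι : Type*} [Fintype ι] {ω : ℂ} {n : ℕ}
    (hn : n ≠ 0) (hω : ω ^ n = 1) (k : ι → ℕ)
    (hint : IsIntegral ℤ ((Fintype.card ι : ℂ)⁻¹ * ∑ i, ω ^ k i)) :
    ∑ i, ω ^ k i = 0 ∨ ∀ i j, ω ^ k i = ω ^ k j := by
  rcases eq_zero_or_norm_eq_one_of_isIntegral_mean_pow hn hω k hint with h | h
  · refine .inl ((mul_eq_zero.1 h).elim (fun hcard => ?_) id)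
    have : IsEmpty ι := Fintype.card_eq_zero_iff.1 (by simpa using hcard)
    rw [Finset.univ_eq_empty, Finset.sum_empty]
  · refine .inr (eq_of_norm_mean_eq_one (fun i => ?_) ?_)
    · simp [Complex.norm_eq_one_of_pow_eq_one hω hn]
    · simpa [Complex.real_smul] using h

namespace AddChar

variable {R R' : Type*} [CommRing R] [Fintype R] [DecidableEq R] [CommRing R'] [IsDomain R']
  {ψ : AddChar R R'}

theorem sum_sum_add_mul (hψ : ψ.IsPrimitive) (f : R → R) :
    ∑ b, ∑ x, ψ (f x + b * x) = Fintype.card R * ψ (f 0) := by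
  calc ∑ b, ∑ x, ψ (f x + b * x) = ∑ x, ψ (f x) * ∑ b, ψ (b * x) := by
        rw [Finset.sum_comm]
        simp_rw [map_add_eq_mul, Finset.mul_sum]
    _ = ∑ x, ψ (f x) * ((if x = 0 then Fintype.card R else 0 : ℕ) : R') := by
        simp only [sum_mulShift _ hψ]
    _ = Fintype.card R * ψ (f 0) := by simp [mul_comm]

theorem sum_mul_add (hψ : ψ.IsPrimitive) (c d : R) :
    ∑ x, ψ (c * x + d) = if c = 0 then Fintype.card R * ψ d else 0 := by
  simp_rw [map_add_eq_mul, ← Finset.sum_mul, mul_comm c, sum_mulShift _ hψ]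
  split_ifs <;> simp

end AddChar

theorem perfect_isometry_iff_linear_bijection
    (p : ℕ) [Fact p.Prime] (ω : ℂ) (hω : ω = Complex.exp (2 * Real.pi * Complex.I / p))
    (f : ZMod p → ZMod p) (hf : Function.Bijective f) :
    (∀ a b : ZMod p,
      IsIntegral ℤ ((1 / (p : ℂ)) * ∑ x : ZMod p, ω ^ (a * f x + b * x).val)) ↔
      ∃ α β : ZMod p, α ≠ 0 ∧ ∀ x : ZMod p, f x = α * x + β := by
  have hp : p ≠ 0 := NeZero.ne p
  have hprim : IsPrimitiveRoot ω p := hω ▸ Complex.isPrimitiveRoot_exp p hp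
  let ψ := AddChar.zmodChar p hprim.pow_eq_one
  have hψ : ψ.IsPrimitive := AddChar.zmodChar_primitive_of_primitive_root p hprim
  have hψω (u : ZMod p) : ω ^ u.val = ψ u := (AddChar.zmodChar_apply _ u).symm
  have hmean : 1 / (p : ℂ) = (Fintype.card (ZMod p) : ℂ)⁻¹ := by rw [ZMod.card, one_div]
  constructor
  · intro h
    obtain ⟨b, hb⟩ : ∃ b, ∀ x, f x + b * x = f 0 := by
      by_contra! hne
      have hzero (b : ZMod p) : ∑ x, ψ (f x + b * x) = 0 := by
        obtain ⟨x, hx⟩ := hne b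
        have := sum_pow_eq_zero_or_pow_eq_of_isIntegral_mean hp hprim.pow_eq_one
          (fun x => (f x + b * x).val) (by simpa [hmean] using h 1 b)
        refine this.resolve_right fun heq => hx ?_
        simpa using ZMod.val_injective p
          (hprim.pow_inj (ZMod.val_lt _) (ZMod.val_lt _) (heq x 0))
      simpa [hzero, hp, (ψ.val_isUnit _).ne_zero] using ψ.sum_sum_add_mul hψ f
    refine ⟨-b, f 0, fun hb0 => ?_, fun x => by linear_combination hb x⟩
    have : f 1 = f 0 := by simpa [neg_eq_zero.1 hb0] using hb 1
    exact one_ne_zero (hf.injective this)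
  · rintro ⟨α, β, -, hfx⟩ a b
    have hlin (x : ZMod p) : a * f x + b * x = (a * α + b) * x + a * β := by rw [hfx]; ring
    simp_rw [hlin, hψω, hmean, ψ.sum_mul_add hψ]
    split_ifs
    · rw [← mul_assoc, inv_mul_cancel₀ (by simp [hp]), one_mul, ← hψω]
      exact (hprim.isIntegral (Nat.pos_of_ne_zero hp)).pow _
    · simpa using isIntegral_zero
end

section
/- Let μ ∈ ℂ be an algebraic integer such that |μ| < 1 and every complex root of the minimal polynomial of μ over ℚ has absolute value at most 1. Then μ = 0. -/
/-!
By Gauss's lemma the minimal polynomial of `μ` over `ℚ` has integer coefficients, so its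
constant term is an integer. Up to sign that term is the product of the conjugates of `μ`; all
of them have absolute value at most `1` and `μ` itself less than `1`, so the integer is `0`,
which forces `μ = 0`.
-/

open Polynomial

theorem Multiset.norm_prod_le_norm_of_mem {K : Type*} [NormedField K] {s : Multiset K} {a : K}
    (ha : a ∈ s) (hs : ∀ x ∈ s, ‖x‖ ≤ 1) : ‖s.prod‖ ≤ ‖a‖ := by
  obtain ⟨t, rfl⟩ := Multiset.exists_cons_of_mem ha
  have ht : ‖t.prod‖ ≤ 1 := by
    rw [← normHom_apply, map_multiset_prod]
    simpa using Multiset.prod_map_le_pow_card (f := normHom) (r := 1)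
      (fun x _ => norm_nonneg x) (fun x hx => hs x (Multiset.mem_cons_of_mem hx))
  rw [Multiset.prod_cons, norm_mul]
  exact mul_le_of_le_one_right (norm_nonneg a) ht

theorem Polynomial.Monic.norm_coeff_zero_le_norm_of_mem_roots {K : Type*} [NormedField K]
    {p : K[X]} (hm : p.Monic) (hp : p.Splits) {a : K} (ha : a ∈ p.roots)
    (hroots : ∀ x ∈ p.roots, ‖x‖ ≤ 1) : ‖p.coeff 0‖ ≤ ‖a‖ := by
  rw [hp.coeff_zero_eq_prod_roots_of_monic hm, norm_mul, norm_pow, norm_neg, norm_one, one_pow,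
    one_mul]
  exact Multiset.norm_prod_le_norm_of_mem ha hroots

theorem minpoly.exists_intCast_coeff {A : Type*} [CommRing A] [IsDomain A] [Algebra ℚ A] {x : A}
    (hx : IsIntegral ℤ x) (n : ℕ) : ∃ m : ℤ, (minpoly ℚ x).coeff n = m :=
  ⟨(minpoly ℤ x).coeff n, by
    rw [minpoly.isIntegrallyClosed_eq_field_fractions' ℚ hx, coeff_map, eq_intCast]⟩

theorem algebraic_integer_eq_zero_of_conjugates_lt_one
    (μ : ℂ) (hμ : IsIntegral ℤ μ) (habs : ‖μ‖ < 1)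
    (hconj : ∀ z : ℂ, Polynomial.aeval z (minpoly ℚ μ) = 0 → ‖z‖ ≤ 1) :
    μ = 0 := by
  have hμQ : IsIntegral ℚ μ := hμ.tower_top
  set P : ℂ[X] := (minpoly ℚ μ).map (algebraMap ℚ ℂ)
  have mem_roots_P {z : ℂ} : z ∈ P.roots ↔ aeval z (minpoly ℚ μ) = 0 := by
    rw [mem_roots_map_of_injective (algebraMap ℚ ℂ).injective (minpoly.ne_zero hμQ), aeval_def]
  have hP : ‖P.coeff 0‖ ≤ ‖μ‖ :=
    ((minpoly.monic hμQ).map _).norm_coeff_zero_le_norm_of_mem_roots (IsAlgClosed.splits P)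
      (mem_roots_P.2 (minpoly.aeval ℚ μ)) fun z hz => hconj z (mem_roots_P.1 hz)
  obtain ⟨m, hm⟩ := minpoly.exists_intCast_coeff hμ 0
  have hm0 : m = 0 := by
    rw [coeff_map, hm, map_intCast, Complex.norm_intCast] at hP
    exact Int.abs_lt_one_iff.1 (by exact_mod_cast hP.trans_lt habs)
  rw [← minpoly.coeff_zero_eq_zero hμQ, hm, hm0, Int.cast_zero]
end
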